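/- arXiv:2503.24004 — 2 statements merged into one kernel-verified Lean document; each statement's English description precedes it below -/
import Mathlib

section
/- Let (P₁,…,P_J) be a multivariate species sampling process with non-atomic base measure P₀, and let X be a sample from (P₁,…,P_J). Then for all j ≠ k in {1,…,J} and every Borel set A ⊆ 𝕏: Cov[P_j(A), P_k(A)] = ℙ(X_{j,1} = X_{k,1}) · P₀(A) · (1 − P₀(A)). -/
open MeasureTheory ProbabilityTheory
open scoped ENNReal

namespace MSSP

variable {Ω : Type*} [MeasurableSpace Ω] {𝕏 : Type*} [MeasurableSpace 𝕏]

/-- The species-sampling mixture measure `∑ₕ wₕ δ_{aₕ} + (1 - ∑ₕ wₕ) P₀`. -/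
noncomputable def mixM (P₀ : Measure 𝕏) (w : ℕ → ℝ) (a : ℕ → 𝕏) : Measure 𝕏 :=
  Measure.sum (fun h => ENNReal.ofReal (w h) • Measure.dirac (a h)) +
    ENNReal.ofReal (1 - ∑' h, w h) • P₀

/-- `(P j)_{j}` is a multivariate species sampling process with base measure `P₀`,
weight array `π` and atoms `θ`. -/
structure IsMSSPwith {ι : Type*} (Pr : Measure Ω) (P₀ : Measure 𝕏)
    (P : ι → Ω → Measure 𝕏) (π : ι → ℕ → Ω → ℝ) (θ : ℕ → Ω → 𝕏) : Prop where
  measP : ∀ j (A : Set 𝕏), MeasurableSet A → Measurable fun ω => P j ω A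
  probP : ∀ j ω, IsProbabilityMeasure (P j ω)
  measπ : ∀ j h, Measurable (π j h)
  subprob : ∀ j, ∀ᵐ ω ∂Pr, (∀ h, 0 ≤ π j h ω ∧ π j h ω ≤ 1) ∧ ∑' h, π j h ω ≤ 1
  measθ : ∀ h, Measurable (θ h)
  lawθ : ∀ h, Measure.map (θ h) Pr = P₀
  iidθ : iIndepFun θ Pr
  indepθπ : IndepFun (fun ω (h : ℕ) => θ h ω) (fun ω (j : ι) (h : ℕ) => π j h ω) Pr
  repr : ∀ j, ∀ᵐ ω ∂Pr, P j ω = mixM P₀ (fun h => π j h ω) (fun h => θ h ω)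

/-- `(P j)_j` is a multivariate species sampling process with base measure `P₀`. -/
def IsMSSP {ι : Type*} (Pr : Measure Ω) (P₀ : Measure 𝕏)
    (P : ι → Ω → Measure 𝕏) : Prop :=
  ∃ π θ, IsMSSPwith Pr P₀ P π θ

/-- `X` is a sample from the vector of random probability measures `P`:
conditionally on `P` the entries are independent, with `X j i` distributed as `P j`. -/
def IsSample {ι : Type*} (Pr : Measure Ω) (P : ι → Ω → Measure 𝕏)
    (X : ι → ℕ → Ω → 𝕏) : Prop :=
  (∀ j i, Measurable (X j i)) ∧
  ∀ (s : Finset (ι × ℕ)) (A : ι × ℕ → Set 𝕏), (∀ p ∈ s, MeasurableSet (A p)) →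
    Pr {ω | ∀ p ∈ s, X p.1 p.2 ω ∈ A p} = ∫⁻ ω, ∏ p ∈ s, P p.1 ω (A p) ∂Pr

/-- Covariance of two real random variables. -/
noncomputable def covR (Pr : Measure Ω) (f g : Ω → ℝ) : ℝ :=
  ∫ ω, f ω * g ω ∂Pr - (∫ ω, f ω ∂Pr) * (∫ ω, g ω ∂Pr)

/-- Correlation of two real random variables. -/
noncomputable def corrR (Pr : Measure Ω) (f g : Ω → ℝ) : ℝ :=
  covR Pr f g / (Real.sqrt (variance f Pr) * Real.sqrt (variance g Pr))

/-! Write each random measure as `P j = ∑ₛ uⱼ(s) • μₛ` over `s : Option ℕ`, with `μ_none = P₀` and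
`μ_(some h) = δ_(θ h)`. The weights are functions of `π` and the components functions of `θ`, so by
independence `E[P j A * P k A] = ∑ₛ ∑ₜ E[uⱼ(s) uₖ(t)] E[μₛ A * μₜ A]`. The second factor is
`P₀ A ^ 2` except on the diagonal `s = t = some h`, where it is `P₀ A`; as the weights sum to one,
`E[P j A * P k A] = P₀ A ^ 2 + (P₀ A - P₀ A ^ 2) E[∑ₕ π j h π k h]`, and likewise `E[P j A] = P₀ A`.
The remaining expectation is the tie probability: `(X j 0, X k 0)` has law `E[P j ⊗ P k]`, and since
the atoms are a.s. distinct and `P₀` is non-atomic, `(P j ⊗ P k)(diagonal) = ∑ₕ π j h π k h`. -/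

open Set Function

lemma tsum_option {α : Type*} (f : Option α → ℝ≥0∞) :
    ∑' s, f s = f none + ∑' a, f (some a) := by
  rw [ENNReal.tsum_eq_add_tsum_ite none]
  congr 1
  convert ((Option.some_injective α).tsum_eq (f := fun s => if s = none then 0 else f s)
    fun s hs => ?_).symm
  · simp
  · cases s with
    | none => simp at hs
    | some a => exact ⟨a, rfl⟩

lemma tsum_tsum_mul_ite_eq_some {α : Type*} [DecidableEq α] (f : Option α → Option α → ℝ≥0∞)
    (c : ℝ≥0∞) :
    ∑' s, ∑' t, f s t * (if s = t ∧ s ≠ none then c else 0) = c * ∑' a, f (some a) (some a) := by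
  have hs (s : Option α) : ∑' t, f s t * (if s = t ∧ s ≠ none then c else 0)
      = f s s * (if s ≠ none then c else 0) := by
    rw [tsum_eq_single s fun t ht => by simp [Ne.symm ht]]
    simp
  rw [tsum_congr hs, tsum_option, ← ENNReal.tsum_mul_left]
  simp [mul_comm]

noncomputable def mixWeight (w : ℕ → ℝ) : Option ℕ → ℝ≥0∞
  | none => ENNReal.ofReal (1 - ∑' h, w h)
  | some h => ENNReal.ofReal (w h)

noncomputable def mixComponent (P₀ : Measure 𝕏) (a : ℕ → 𝕏) : Option ℕ → Measure 𝕏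
  | none => P₀
  | some h => Measure.dirac (a h)

lemma measurable_mixWeight (s : Option ℕ) : Measurable fun w : ℕ → ℝ => mixWeight w s := by
  cases s with
  | none => exact (measurable_const.sub (.tsum measurable_pi_apply)).ennreal_ofReal
  | some h => exact (measurable_pi_apply h).ennreal_ofReal

lemma measurable_mixComponent_apply (P₀ : Measure 𝕏) {A : Set 𝕏} (hA : MeasurableSet A)
    (s : Option ℕ) : Measurable fun a : ℕ → 𝕏 => mixComponent P₀ a s A := by
  cases s with
  | none => exact measurable_const (a := P₀ A)
  | some h =>
    exact (Measure.measurable_coe hA).comp (Measure.measurable_dirac.comp (measurable_pi_apply h))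

lemma mixM_eq_sum (P₀ : Measure 𝕏) (w : ℕ → ℝ) (a : ℕ → 𝕏) :
    mixM P₀ w a = Measure.sum fun s => mixWeight w s • mixComponent P₀ a s := by
  ext A hA
  simp [mixM, Measure.sum_apply _ hA, tsum_option, mixWeight, mixComponent, add_comm]

lemma mixM_apply_eq_tsum (P₀ : Measure 𝕏) (w : ℕ → ℝ) (a : ℕ → 𝕏) {A : Set 𝕏}
    (hA : MeasurableSet A) : mixM P₀ w a A = ∑' s, mixWeight w s * mixComponent P₀ a s A := by
  simp [mixM_eq_sum, Measure.sum_apply _ hA]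

lemma tsum_mixWeight (P₀ : Measure 𝕏) [IsProbabilityMeasure P₀] {w : ℕ → ℝ} {a : ℕ → 𝕏}
    (h : IsProbabilityMeasure (mixM P₀ w a)) : ∑' s, mixWeight w s = 1 := by
  have := mixM_apply_eq_tsum P₀ w a .univ
  have hc : ∀ s, mixComponent P₀ a s univ = 1 := by
    intro s; cases s <;> simp [mixComponent]
  simpa [hc] using this.symm

instance (P₀ : Measure 𝕏) [SFinite P₀] (w : ℕ → ℝ) (a : ℕ → 𝕏) : SFinite (mixM P₀ w a) := by
  unfold mixM; infer_instance

section Diagonal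

variable [MeasurableEq 𝕏] (μ ν : Measure 𝕏) [SFinite ν]

lemma prod_diagonal_eq_lintegral : (μ.prod ν) (diagonal 𝕏) = ∫⁻ x, ν {x} ∂μ := by
  rw [Measure.prod_apply measurableSet_diagonal]
  refine lintegral_congr fun x => congrArg ν ?_
  ext y
  simp [eq_comm]

lemma prod_diagonal_eq_zero [SFinite μ] [NullSingletonClass μ] : (μ.prod ν) (diagonal 𝕏) = 0 := by
  rw [Measure.prod_apply_symm measurableSet_diagonal]
  refine (lintegral_congr fun y => ?_).trans lintegral_zero
  rw [show (fun x => (x, y)) ⁻¹' diagonal 𝕏 = {y} by ext; simp]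
  exact measure_singleton y

lemma mixM_singleton_of_injective (P₀ : Measure 𝕏) [NullSingletonClass P₀] (w : ℕ → ℝ)
    {a : ℕ → 𝕏} (ha : Injective a) (h : ℕ) : mixM P₀ w a {a h} = ENNReal.ofReal (w h) := by
  rw [mixM_apply_eq_tsum _ _ _ (measurableSet_singleton _), tsum_option,
    tsum_eq_single h fun l hl => by simp [mixComponent, ha.ne hl]]
  simp [mixWeight, mixComponent]

lemma mixM_prod_mixM_diagonal (P₀ : Measure 𝕏) [SFinite P₀] [NullSingletonClass P₀]
    (w v : ℕ → ℝ) {a : ℕ → 𝕏} (ha : Injective a) :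
    (mixM P₀ w a).prod (mixM P₀ v a) (diagonal 𝕏)
      = ∑' h, ENNReal.ofReal (w h) * ENNReal.ofReal (v h) := by
  have hP₀ : ∫⁻ x, mixM P₀ v a {x} ∂P₀ = 0 := by
    rw [← prod_diagonal_eq_lintegral, prod_diagonal_eq_zero]
  rw [prod_diagonal_eq_lintegral, mixM_eq_sum, lintegral_sum_measure, tsum_option]
  simp [mixWeight, mixComponent, hP₀, mixM_singleton_of_injective _ _ ha]

end Diagonal

lemma lintegral_tsum_mul_tsum {α β : Type*} [Countable α] [Countable β] {μ : Measure Ω}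
    {f : α → Ω → ℝ≥0∞} {g : β → Ω → ℝ≥0∞} (hf : ∀ s, AEMeasurable (f s) μ)
    (hg : ∀ t, AEMeasurable (g t) μ) :
    ∫⁻ ω, (∑' s, f s ω) * (∑' t, g t ω) ∂μ = ∑' s, ∑' t, ∫⁻ ω, f s ω * g t ω ∂μ := by
  simp_rw [← ENNReal.tsum_mul_right, ← ENNReal.tsum_mul_left]
  rw [lintegral_tsum (f := fun s ω => ∑' t, f s ω * g t ω)
    fun s => AEMeasurable.tsum fun t => (hf s).mul (hg t)]
  exact tsum_congr fun s => lintegral_tsum fun t => (hf s).mul (hg t)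

lemma covR_toReal (Pr : Measure Ω) {f g : Ω → ℝ≥0∞} (hf : AEMeasurable f Pr)
    (hg : AEMeasurable g Pr) (hf_lt : ∀ᵐ ω ∂Pr, f ω < ∞) (hg_lt : ∀ᵐ ω ∂Pr, g ω < ∞) :
    covR Pr (fun ω => (f ω).toReal) (fun ω => (g ω).toReal)
      = (∫⁻ ω, f ω * g ω ∂Pr).toReal - (∫⁻ ω, f ω ∂Pr).toReal * (∫⁻ ω, g ω ∂Pr).toReal := by
  have hfg_lt : ∀ᵐ ω ∂Pr, f ω * g ω < ∞ := by
    filter_upwards [hf_lt, hg_lt] with ω h₁ h₂ using ENNReal.mul_lt_top h₁ h₂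
  rw [covR, integral_toReal hf hf_lt, integral_toReal hg hg_lt,
    ← integral_toReal (f := fun ω => f ω * g ω) (hf.mul hg) hfg_lt]
  simp only [ENNReal.toReal_mul]

section Sample

variable {ι : Type*} {Pr : Measure Ω} {P : ι → Ω → Measure 𝕏} {X : ι → ℕ → Ω → 𝕏}

lemma IsSample.measure_mem_and_mem (hX : IsSample Pr P X) {j k : ι} {i m : ℕ}
    (hne : (j, i) ≠ (k, m)) {s t : Set 𝕏} (hs : MeasurableSet s) (ht : MeasurableSet t) :
    Pr {ω | X j i ω ∈ s ∧ X k m ω ∈ t} = ∫⁻ ω, P j ω s * P k ω t ∂Pr := by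
  classical
  have h := hX.2 {(j, i), (k, m)} (fun p => if p = (j, i) then s else t)
    (by intro p _; split_ifs; exacts [hs, ht])
  simpa [Finset.prod_pair hne, hne.symm] using h

lemma IsSample.measure_pair_mem (hX : IsSample Pr P X) [IsFiniteMeasure Pr]
    (hPm : ∀ j, Measurable (P j)) (hP : ∀ j ω, IsProbabilityMeasure (P j ω))
    {j k : ι} {i m : ℕ} (hne : (j, i) ≠ (k, m)) {D : Set (𝕏 × 𝕏)} (hD : MeasurableSet D) :
    Pr {ω | (X j i ω, X k m ω) ∈ D} = ∫⁻ ω, (P j ω).prod (P k ω) D ∂Pr := by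
  let κ : ι → Kernel Ω 𝕏 := fun j => ⟨P j, hPm j⟩
  have : ∀ j, IsMarkovKernel (κ j) := fun j => ⟨hP j⟩
  have hpair : Measurable fun ω => (X j i ω, X k m ω) := (hX.1 j i).prodMk (hX.1 k m)
  have hlaw : Pr.map (fun ω => (X j i ω, X k m ω)) = Pr.bind (κ j ×ₖ κ k) := by
    refine Measure.ext_prod fun hs ht => ?_
    rw [Measure.map_apply hpair (hs.prod ht),
      Measure.bind_apply (hs.prod ht) (Kernel.aemeasurable _)]
    simp only [Kernel.prod_apply, κ, Kernel.coe_mk, Measure.prod_prod]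
    exact hX.measure_mem_and_mem hne hs ht
  have hD_law := congrArg (· D) hlaw
  simp only [Measure.map_apply hpair hD, Measure.bind_apply hD (Kernel.aemeasurable _),
    Kernel.prod_apply, κ, Kernel.coe_mk] at hD_law
  exact hD_law

end Sample

namespace IsMSSPwith

variable {ι : Type*} {Pr : Measure Ω} {P₀ : Measure 𝕏} {P : ι → Ω → Measure 𝕏}
  {π : ι → ℕ → Ω → ℝ} {θ : ℕ → Ω → 𝕏} {A : Set 𝕏}

lemma measurable_measure (hM : IsMSSPwith Pr P₀ P π θ) (j : ι) : Measurable (P j) :=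
  Measure.measurable_of_measurable_coe _ (hM.measP j)

lemma measurable_mixWeight (hM : IsMSSPwith Pr P₀ P π θ) (j : ι) (s : Option ℕ) :
    Measurable fun ω => mixWeight (fun h => π j h ω) s :=
  (MSSP.measurable_mixWeight s).comp (measurable_pi_lambda _ (hM.measπ j))

lemma measurable_mixComponent_apply (hM : IsMSSPwith Pr P₀ P π θ) (hA : MeasurableSet A)
    (s : Option ℕ) : Measurable fun ω => mixComponent P₀ (fun h => θ h ω) s A :=
  (MSSP.measurable_mixComponent_apply P₀ hA s).comp (measurable_pi_lambda _ hM.measθ)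

lemma indepFun_weights_atoms (hM : IsMSSPwith Pr P₀ P π θ) {G : (ι → ℕ → ℝ) → ℝ≥0∞}
    (hG : Measurable G) {F : (ℕ → 𝕏) → ℝ≥0∞} (hF : Measurable F) :
    IndepFun (fun ω => G fun j h => π j h ω) (fun ω => F fun h => θ h ω) Pr :=
  hM.indepθπ.symm.comp hG hF

lemma lintegral_dirac_atom (hM : IsMSSPwith Pr P₀ P π θ) (hA : MeasurableSet A) (h : ℕ) :
    ∫⁻ ω, Measure.dirac (θ h ω) A ∂Pr = P₀ A := by
  rw [← lintegral_map (f := fun x => Measure.dirac x A)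
      (Measure.measurable_coe hA |>.comp Measure.measurable_dirac) (hM.measθ h),
    hM.lawθ h, ← Measure.bind_apply hA Measure.measurable_dirac.aemeasurable, Measure.bind_dirac]

lemma lintegral_mixComponent_apply [IsProbabilityMeasure Pr] (hM : IsMSSPwith Pr P₀ P π θ)
    (hA : MeasurableSet A) (s : Option ℕ) :
    ∫⁻ ω, mixComponent P₀ (fun h => θ h ω) s A ∂Pr = P₀ A := by
  cases s with
  | none => simp [mixComponent]
  | some h => exact hM.lintegral_dirac_atom hA h

lemma lintegral_mixComponent_apply_mul [IsProbabilityMeasure Pr] [IsProbabilityMeasure P₀]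
    (hM : IsMSSPwith Pr P₀ P π θ)
    (hA : MeasurableSet A) (s t : Option ℕ) :
    ∫⁻ ω, mixComponent P₀ (fun h => θ h ω) s A * mixComponent P₀ (fun h => θ h ω) t A ∂Pr
      = P₀ A * P₀ A + if s = t ∧ s ≠ none then P₀ A - P₀ A * P₀ A else 0 := by
  rcases s with _ | h
  · change ∫⁻ ω, P₀ A * mixComponent P₀ (fun h => θ h ω) t A ∂Pr = _
    rw [lintegral_const_mul _ (hM.measurable_mixComponent_apply hA t),
      hM.lintegral_mixComponent_apply hA]
    simp
  rcases t with _ | l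
  · change ∫⁻ ω, mixComponent P₀ (fun h => θ h ω) (some h) A * P₀ A ∂Pr = _
    rw [lintegral_mul_const _ (hM.measurable_mixComponent_apply hA _),
      hM.lintegral_mixComponent_apply hA]
    simp
  have hδ : Measurable fun x => Measure.dirac x A :=
    (Measure.measurable_coe hA).comp Measure.measurable_dirac
  by_cases hl : h = l
  · subst hl
    have hsq (x : 𝕏) : Measure.dirac x A * Measure.dirac x A = Measure.dirac x A := by
      by_cases hx : x ∈ A <;> simp [Measure.dirac_apply' _ hA, hx]
    simp only [mixComponent, hsq, hM.lintegral_dirac_atom hA, ne_eq, reduceCtorEq,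
      not_false_eq_true, and_self, if_true]
    exact (add_tsub_cancel_of_le (mul_le_of_le_one_left' prob_le_one)).symm
  · simp only [mixComponent]
    rw [lintegral_mul_eq_lintegral_mul_lintegral_of_indepFun''
      (f := fun ω => Measure.dirac (θ h ω) A) (g := fun ω => Measure.dirac (θ l ω) A)
      (hδ.comp (hM.measθ h)).aemeasurable (hδ.comp (hM.measθ l)).aemeasurable
      ((hM.iidθ.indepFun hl).comp hδ hδ), hM.lintegral_dirac_atom hA, hM.lintegral_dirac_atom hA]
    simp [hl]

lemma ae_apply_eq_tsum (hM : IsMSSPwith Pr P₀ P π θ) (hA : MeasurableSet A) (j : ι) :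
    ∀ᵐ ω ∂Pr, P j ω A
      = ∑' s, mixWeight (fun h => π j h ω) s * mixComponent P₀ (fun h => θ h ω) s A := by
  filter_upwards [hM.repr j] with ω hω
  rw [hω, mixM_apply_eq_tsum _ _ _ hA]

lemma ae_tsum_mixWeight [IsProbabilityMeasure P₀] (hM : IsMSSPwith Pr P₀ P π θ) (j : ι) :
    ∀ᵐ ω ∂Pr, ∑' s, mixWeight (fun h => π j h ω) s = 1 := by
  filter_upwards [hM.repr j] with ω hω
  exact tsum_mixWeight P₀ (hω ▸ hM.probP j ω)

lemma lintegral_apply [IsProbabilityMeasure Pr] [IsProbabilityMeasure P₀]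
    (hM : IsMSSPwith Pr P₀ P π θ) (hA : MeasurableSet A) (j : ι) :
    ∫⁻ ω, P j ω A ∂Pr = P₀ A := by
  have hu := hM.measurable_mixWeight j
  have hZ := hM.measurable_mixComponent_apply hA
  have hfactor (s : Option ℕ) :
      ∫⁻ ω, mixWeight (fun h => π j h ω) s * mixComponent P₀ (fun h => θ h ω) s A ∂Pr
        = (∫⁻ ω, mixWeight (fun h => π j h ω) s ∂Pr) * P₀ A := by
    rw [lintegral_mul_eq_lintegral_mul_lintegral_of_indepFun'' (hu s).aemeasurable
      (hZ s).aemeasurable (hM.indepFun_weights_atoms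
        ((MSSP.measurable_mixWeight s).comp (measurable_pi_apply j))
        (MSSP.measurable_mixComponent_apply P₀ hA s)), hM.lintegral_mixComponent_apply hA]
  calc ∫⁻ ω, P j ω A ∂Pr
      = ∑' s, ∫⁻ ω, mixWeight (fun h => π j h ω) s * mixComponent P₀ (fun h => θ h ω) s A ∂Pr := by
        rw [lintegral_congr_ae (hM.ae_apply_eq_tsum hA j)]
        exact lintegral_tsum fun s => ((hu s).mul (hZ s)).aemeasurable
    _ = (∫⁻ ω, ∑' s, mixWeight (fun h => π j h ω) s ∂Pr) * P₀ A := by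
        rw [lintegral_tsum fun s => (hu s).aemeasurable, ← ENNReal.tsum_mul_right]
        exact tsum_congr hfactor
    _ = P₀ A := by simp [lintegral_congr_ae (hM.ae_tsum_mixWeight j)]

lemma lintegral_mixWeight_mul_mixComponent_mul [IsProbabilityMeasure Pr]
    [IsProbabilityMeasure P₀] (hM : IsMSSPwith Pr P₀ P π θ) (hA : MeasurableSet A)
    (j k : ι) (s t : Option ℕ) :
    ∫⁻ ω, (mixWeight (fun h => π j h ω) s * mixComponent P₀ (fun h => θ h ω) s A)
        * (mixWeight (fun h => π k h ω) t * mixComponent P₀ (fun h => θ h ω) t A) ∂Pr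
      = (∫⁻ ω, mixWeight (fun h => π j h ω) s * mixWeight (fun h => π k h ω) t ∂Pr)
        * (P₀ A * P₀ A + if s = t ∧ s ≠ none then P₀ A - P₀ A * P₀ A else 0) := by
  have hind := hM.indepFun_weights_atoms
    (((MSSP.measurable_mixWeight s).comp (measurable_pi_apply j)).mul
      ((MSSP.measurable_mixWeight t).comp (measurable_pi_apply k)))
    ((MSSP.measurable_mixComponent_apply P₀ hA s).mul
      (MSSP.measurable_mixComponent_apply P₀ hA t))
  rw [← hM.lintegral_mixComponent_apply_mul hA s t]
  refine (lintegral_congr fun ω => mul_mul_mul_comm _ _ _ _).trans ?_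
  exact lintegral_mul_eq_lintegral_mul_lintegral_of_indepFun''
    ((hM.measurable_mixWeight j s).mul (hM.measurable_mixWeight k t)).aemeasurable
    ((hM.measurable_mixComponent_apply hA s).mul
      (hM.measurable_mixComponent_apply hA t)).aemeasurable hind

lemma lintegral_apply_mul_apply [IsProbabilityMeasure Pr] [IsProbabilityMeasure P₀]
    (hM : IsMSSPwith Pr P₀ P π θ) (hA : MeasurableSet A) (j k : ι) :
    ∫⁻ ω, P j ω A * P k ω A ∂Pr = P₀ A * P₀ A + (P₀ A - P₀ A * P₀ A)
      * ∫⁻ ω, ∑' h, ENNReal.ofReal (π j h ω) * ENNReal.ofReal (π k h ω) ∂Pr := by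
  set a := P₀ A
  set u : ι → Option ℕ → Ω → ℝ≥0∞ := fun j s ω => mixWeight (fun h => π j h ω) s
  set Z : Option ℕ → Ω → ℝ≥0∞ := fun s ω => mixComponent P₀ (fun h => θ h ω) s A
  have hu (j : ι) (s : Option ℕ) : Measurable (u j s) := hM.measurable_mixWeight j s
  have hZ (s : Option ℕ) : Measurable (Z s) := hM.measurable_mixComponent_apply hA s
  have hdiag : ∑' s, ∑' t, (∫⁻ ω, u j s ω * u k t ω ∂Pr)
        * (if s = t ∧ s ≠ none then a - a * a else 0)
      = (a - a * a) * ∫⁻ ω, ∑' h, ENNReal.ofReal (π j h ω) * ENNReal.ofReal (π k h ω) ∂Pr := by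
    rw [tsum_tsum_mul_ite_eq_some,
      lintegral_tsum (f := fun h ω => ENNReal.ofReal (π j h ω) * ENNReal.ofReal (π k h ω))
        fun h => ((hu j (some h)).mul (hu k (some h))).aemeasurable]
    rfl
  have htotal : ∫⁻ ω, (∑' s, u j s ω) * (∑' t, u k t ω) ∂Pr = 1 := by
    rw [lintegral_congr_ae (g := 1)]
    · simp
    filter_upwards [hM.ae_tsum_mixWeight j, hM.ae_tsum_mixWeight k] with ω hj hk
    simp [u, hj, hk]
  calc ∫⁻ ω, P j ω A * P k ω A ∂Pr
      = ∫⁻ ω, (∑' s, u j s ω * Z s ω) * (∑' t, u k t ω * Z t ω) ∂Pr := by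
        refine lintegral_congr_ae ?_
        filter_upwards [hM.ae_apply_eq_tsum hA j, hM.ae_apply_eq_tsum hA k] with ω hj hk
        rw [hj, hk]
    _ = ∑' s, ∑' t, (∫⁻ ω, u j s ω * u k t ω ∂Pr)
          * (a * a + if s = t ∧ s ≠ none then a - a * a else 0) := by
        rw [lintegral_tsum_mul_tsum (f := fun s ω => u j s ω * Z s ω)
          (g := fun t ω => u k t ω * Z t ω) (fun s => ((hu j s).mul (hZ s)).aemeasurable)
          (fun t => ((hu k t).mul (hZ t)).aemeasurable)]
        exact tsum_congr fun s => tsum_congr fun t =>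
          hM.lintegral_mixWeight_mul_mixComponent_mul hA j k s t
    _ = a * a + (a - a * a)
          * ∫⁻ ω, ∑' h, ENNReal.ofReal (π j h ω) * ENNReal.ofReal (π k h ω) ∂Pr := by
        simp_rw [mul_add, ENNReal.tsum_add, ENNReal.tsum_mul_right]
        rw [hdiag, ← lintegral_tsum_mul_tsum (fun s => (hu j s).aemeasurable)
          (fun t => (hu k t).aemeasurable), htotal, one_mul]

lemma ae_injective_atoms [IsFiniteMeasure Pr] [MeasurableEq 𝕏] [SFinite P₀]
    [NullSingletonClass P₀] (hM : IsMSSPwith Pr P₀ P π θ) : ∀ᵐ ω ∂Pr, Injective fun h => θ h ω := by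
  have htie (h l : ℕ) (hne : h ≠ l) : Pr {ω | θ h ω = θ l ω} = 0 := by
    have hpair := (hM.measθ h).prodMk (hM.measθ l)
    have hlaw := (indepFun_iff_map_prod_eq_prod_map_map (hM.measθ h).aemeasurable
      (hM.measθ l).aemeasurable).mp (hM.iidθ.indepFun hne)
    rw [hM.lawθ, hM.lawθ] at hlaw
    rw [← prod_diagonal_eq_zero P₀ P₀, ← hlaw, Measure.map_apply hpair measurableSet_diagonal]
    rfl
  have : ∀ᵐ ω ∂Pr, ∀ h l, h ≠ l → θ h ω ≠ θ l ω := by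
    simp only [ae_all_iff]
    intro h l hne
    simpa [ae_iff] using htie h l hne
  filter_upwards [this] with ω hω h l hhl
  by_contra hne
  exact hω h l hne hhl

lemma measure_tie_eq_lintegral [IsProbabilityMeasure Pr] [MeasurableEq 𝕏]
    [IsProbabilityMeasure P₀] [NullSingletonClass P₀] (hM : IsMSSPwith Pr P₀ P π θ)
    {X : ι → ℕ → Ω → 𝕏} (hX : IsSample Pr P X) {j k : ι} {i m : ℕ} (hne : (j, i) ≠ (k, m)) :
    Pr {ω | X j i ω = X k m ω}
      = ∫⁻ ω, ∑' h, ENNReal.ofReal (π j h ω) * ENNReal.ofReal (π k h ω) ∂Pr := by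
  rw [show {ω | X j i ω = X k m ω} = {ω | (X j i ω, X k m ω) ∈ diagonal 𝕏} from rfl,
    hX.measure_pair_mem hM.measurable_measure hM.probP hne measurableSet_diagonal]
  refine lintegral_congr_ae ?_
  filter_upwards [hM.repr j, hM.repr k, hM.ae_injective_atoms] with ω hj hk hinj
  rw [hj, hk, mixM_prod_mixM_diagonal P₀ _ _ hinj]

end IsMSSPwith

/-- For a multivariate species sampling process, the covariance of `P j (A)` and
`P k (A)` (for `j ≠ k`) equals the across-group tie probability times `P₀ A (1 - P₀ A)`. -/
theorem mSSP_covariance {Ω : Type*} [MeasurableSpace Ω] {𝕏 : Type*} [MeasurableSpace 𝕏]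
    [StandardBorelSpace 𝕏] {ι : Type*}
    (Pr : Measure Ω) [IsProbabilityMeasure Pr]
    (P₀ : Measure 𝕏) [IsProbabilityMeasure P₀] [NullSingletonClass P₀]
    (P : ι → Ω → Measure 𝕏) (hP : IsMSSP Pr P₀ P)
    (X : ι → ℕ → Ω → 𝕏) (hX : IsSample Pr P X)
    (j k : ι) (hjk : j ≠ k) (A : Set 𝕏) (hA : MeasurableSet A) :
    covR Pr (fun ω => (P j ω A).toReal) (fun ω => (P k ω A).toReal)
      = (Pr {ω | X j 0 ω = X k 0 ω}).toReal * (P₀ A).toReal * (1 - (P₀ A).toReal) := by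
  obtain ⟨π, θ, hM⟩ := hP
  have hPA (l : ι) : AEMeasurable (fun ω => P l ω A) Pr := (hM.measP l A hA).aemeasurable
  have hPA_lt (l : ι) : ∀ᵐ ω ∂Pr, P l ω A < ∞ :=
    ae_of_all _ fun ω => by have := hM.probP l ω; exact measure_lt_top _ _
  have htie := hM.measure_tie_eq_lintegral hX (i := 0) (m := 0) (by simpa using hjk)
  rw [covR_toReal Pr (hPA j) (hPA k) (hPA_lt j) (hPA_lt k), hM.lintegral_apply_mul_apply hA,
    hM.lintegral_apply hA, hM.lintegral_apply hA, ← htie]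
  have ha : P₀ A ≤ 1 := prob_le_one
  have haa : P₀ A * P₀ A ≤ P₀ A := mul_le_of_le_one_left' ha
  rw [ENNReal.toReal_add (by finiteness) (by finiteness), ENNReal.toReal_mul, ENNReal.toReal_mul,
    ENNReal.toReal_sub_of_le haa (by finiteness), ENNReal.toReal_mul]
  ring

end MSSP
end

section
/- Let (P₁,…,P_J) be a proper multivariate species sampling process with non-atomic base measure P₀ and weight array π = (π_{j,h} : j ≤ J, h ≥ 1). Then its partially exchangeable partition probability function satisfies, for every D ≥ 1 and every admissible composition matrix (n_{j,d}): pEPPF_D^{(n)}(n₁,…,n_J) = E[ Σ_{(h₁,…,h_D)} ∏_{j=1}^J ∏_{d=1}^D π_{j,h_d}^{n_{j,d}} ], where the sum runs over all D-tuples (h₁,…,h_D) of pairwise distinct positive integers. -/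
/-!
For a proper process the diffuse component of each `P_j` vanishes, so given the weights, `P_j`
is the image under `h ↦ θ_h` of the discrete law `(π_{j,h})_h` on indices. The atoms are i.i.d.
with a diffuse law, hence almost surely pairwise distinct, so ties among the observations are
exactly ties among the sampled indices. The probability that the indices have the blocks of `c`
is then the sum, over injective assignments `d ↦ h_d` of indices to blocks, of
`∏_j ∏_d π_{j,h_d}^{n_{j,d}}`.
-/

open MeasureTheory ProbabilityTheory
open scoped ENNReal

namespace MSSP

variable {Ω : Type*} [MeasurableSpace Ω] {𝕏 : Type*} [MeasurableSpace 𝕏]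

/-- The partially exchangeable partition probability function of a vector `P` of random
probability measures, for group sizes `I` and the partition of the labels
`Σ j, Fin (I j)` encoded by the block-assignment map `c`: it is the expected probability, under
the conditional product law of the sample, that the observations are equal exactly according
to the blocks of `c` (i.e. `E[∫_{𝕏^D_*} ∏_d ∏_j P_j(dx_d)^{n_{j,d}}]`). -/
noncomputable def pEPPF {J : ℕ} (Pr : Measure Ω) (P : Fin J → Ω → Measure 𝕏)
    {I : Fin J → ℕ} {D : ℕ} (c : (Σ j, Fin (I j)) → Fin D) : ℝ≥0∞ :=
  ∫⁻ ω, Measure.pi (fun l : Σ j, Fin (I j) => P l.1 ω)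
      {x | ∀ a b : Σ j, Fin (I j), x a = x b ↔ c a = c b} ∂Pr

section SameBlocks

variable {L M β γ : Type*}

theorem measurableSet_sameBlocks [Countable L] [MeasurableSpace β] [MeasurableEq β] (c : L → M) :
    MeasurableSet {x : L → β | ∀ a b, x a = x b ↔ c a = c b} := by
  simp only [Set.ofPred_forall]
  refine .iInter fun a => .iInter fun b => ?_
  have hdiag : MeasurableSet {x : L → β | x a = x b} :=
    measurableSet_eq_fun (measurable_pi_apply a) (measurable_pi_apply b)
  by_cases hab : c a = c b
  · simpa only [hab, iff_true] using hdiag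
  · simp only [hab, iff_false]
    exact hdiag.compl

theorem preimage_comp_sameBlocks {φ : γ → β} (hφ : Function.Injective φ) (c : L → M) :
    (fun (g : L → γ) l => φ (g l)) ⁻¹' {x : L → β | ∀ a b, x a = x b ↔ c a = c b}
      = {g | ∀ a b, g a = g b ↔ c a = c b} := by
  ext g
  simp only [Set.mem_preimage, Set.mem_ofPred_eq, hφ.eq_iff]

noncomputable def injectiveEquivSameBlocks {c : L → M} (hc : Function.Surjective c) :
    {f : M → β // Function.Injective f} ≃ {g : L → β | ∀ a b, g a = g b ↔ c a = c b} where
  toFun f := ⟨f.1 ∘ c, fun a b => f.2.eq_iff⟩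
  invFun g := ⟨g.1 ∘ Function.surjInv hc, fun d d' hdd' => by
    simpa only [Function.surjInv_eq hc] using (g.2 _ _).1 hdd'⟩
  left_inv f := Subtype.ext <| funext fun d => by simp [Function.surjInv_eq hc]
  right_inv g := Subtype.ext <| funext fun l => (g.2 _ l).2 (Function.surjInv_eq hc (c l))

end SameBlocks

theorem _root_.ProbabilityTheory.IndepFun.measure_eq_eq_zero [MeasurableEq 𝕏]
    {Pr : Measure Ω} [IsFiniteMeasure Pr] {X Y : Ω → 𝕏} (hXY : IndepFun X Y Pr)
    (hX : Measurable X) (hY : Measurable Y)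
    [NullSingletonClass (Pr.map Y)] : Pr {ω | X ω = Y ω} = 0 := by
  have hdiag : MeasurableSet {p : 𝕏 × 𝕏 | p.1 = p.2} := measurableSet_diagonal
  have hsection (x : 𝕏) : Prod.mk x ⁻¹' {p : 𝕏 × 𝕏 | p.1 = p.2} = {x} := by
    ext y; simp [eq_comm]
  calc Pr {ω | X ω = Y ω} = Pr.map (fun ω => (X ω, Y ω)) {p : 𝕏 × 𝕏 | p.1 = p.2} := by
        rw [Measure.map_apply (hX.prodMk hY) hdiag]; rfl
    _ = ((Pr.map X).prod (Pr.map Y)) {p : 𝕏 × 𝕏 | p.1 = p.2} := by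
        rw [(indepFun_iff_map_prod_eq_prod_map_map hX.aemeasurable hY.aemeasurable).1 hXY]
    _ = 0 := by simp [Measure.prod_apply hdiag, hsection]

theorem _root_.ProbabilityTheory.iIndepFun.ae_injective [MeasurableEq 𝕏] {ι : Type*}
    [Countable ι] {Pr : Measure Ω} [IsFiniteMeasure Pr] {X : ι → Ω → 𝕏} (hX : iIndepFun X Pr)
    (hmeas : ∀ i, Measurable (X i))
    {μ : Measure 𝕏} [NullSingletonClass μ] (hlaw : ∀ i, Pr.map (X i) = μ) :
    ∀ᵐ ω ∂Pr, Function.Injective fun i => X i ω := by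
  have hpair (i j : ι) : ∀ᵐ ω ∂Pr, X i ω = X j ω → i = j := by
    rcases eq_or_ne i j with rfl | hij
    · exact .of_forall fun _ _ => rfl
    · have : NullSingletonClass (Pr.map (X j)) := hlaw j ▸ ‹_›
      have hzero := (hX.indepFun hij).measure_eq_eq_zero (hmeas i) (hmeas j)
      filter_upwards [measure_eq_zero_iff_ae_notMem.1 hzero] with ω hω h
      exact absurd h hω
  exact ae_all_iff.2 fun i => ae_all_iff.2 (hpair i)

theorem _root_.MeasureTheory.Measure.pi_apply_eq_tsum {ι α : Type*} [Fintype ι] [Countable α]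
    [MeasurableSpace α] [MeasurableSingletonClass α] (ν : ι → Measure α) [∀ i, SigmaFinite (ν i)]
    (S : Set (ι → α)) : Measure.pi ν S = ∑' g : S, ∏ i, ν i {g.1 i} := by
  rw [← Measure.tsum_indicator_apply_singleton _ S S.to_countable.measurableSet,
    ← tsum_subtype S fun g => Measure.pi ν {g}]
  exact tsum_congr fun g => by rw [← Set.univ_pi_singleton, Measure.pi_pi]

/-- Pushing independent draws from discrete laws forward along an injection `a` does not create
new ties, so the blocks of the image are those of the discrete draw. -/
theorem pi_map_sameBlocks {L M α : Type*} [Fintype L] [Countable α] [MeasurableSpace α]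
    [MeasurableSingletonClass α] [MeasurableEq 𝕏] (ν : L → Measure α)
    [∀ l, IsFiniteMeasure (ν l)] {a : α → 𝕏} (ha : Function.Injective a) {c : L → M}
    (hc : Function.Surjective c) :
    Measure.pi (fun l => (ν l).map a) {x | ∀ l l', x l = x l' ↔ c l = c l'}
      = ∑' f : {f : M → α // Function.Injective f}, ∏ l, ν l {f.1 (c l)} := by
  have hmeas : Measurable a := measurable_of_countable a
  rw [← Measure.pi_map_pi fun l => hmeas.aemeasurable,
    Measure.map_apply (measurable_of_countable _) (measurableSet_sameBlocks c),
    preimage_comp_sameBlocks ha c, Measure.pi_apply_eq_tsum]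
  exact ((injectiveEquivSameBlocks hc).tsum_eq fun g => ∏ l, ν l {g.1 l}).symm

theorem prod_sigma_eq_prod_pow_card {ι : Type*} [Fintype ι] {κ : ι → Type*}
    [∀ i, Fintype (κ i)] {M N : Type*} [Fintype M] [DecidableEq M] [CommMonoid N]
    (c : (Σ i, κ i) → M) (g : ι → M → N) :
    ∏ l, g l.1 (c l) = ∏ i, ∏ m, g i m ^ (Finset.univ.filter fun k => c ⟨i, k⟩ = m).card := by
  rw [← Finset.univ_sigma_univ, Finset.prod_sigma]
  refine Finset.prod_congr rfl fun i _ => ?_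
  rw [← Finset.prod_fiberwise' Finset.univ (fun k => c ⟨i, k⟩) (g i)]
  exact Finset.prod_congr rfl fun m _ => Finset.prod_const _

noncomputable def weightMeasure (w : ℕ → ℝ) : Measure ℕ :=
  Measure.sum fun h => ENNReal.ofReal (w h) • Measure.dirac h

theorem weightMeasure_singleton (w : ℕ → ℝ) (h : ℕ) :
    weightMeasure w {h} = ENNReal.ofReal (w h) := by
  rw [weightMeasure, Measure.sum_apply _ (measurableSet_singleton h),
    tsum_eq_single h fun k hk => by simp [hk]]
  simp

theorem isProbabilityMeasure_weightMeasure {w : ℕ → ℝ} (hw : ∀ h, 0 ≤ w h)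
    (hsum : ∑' h, w h = 1) : IsProbabilityMeasure (weightMeasure w) := by
  have hs : Summable w := by
    by_contra hs
    rw [tsum_eq_zero_of_not_summable hs] at hsum
    exact zero_ne_one hsum
  exact HasSum.isProbabilityMeasure_sum_dirac hw (hsum ▸ hs.hasSum)

theorem mixM_eq_map_weightMeasure (P₀ : Measure 𝕏) {w : ℕ → ℝ} (hsum : ∑' h, w h = 1)
    (a : ℕ → 𝕏) : mixM P₀ w a = (weightMeasure w).map a := by
  rw [mixM, hsum, sub_self, ENNReal.ofReal_zero, zero_smul, add_zero, weightMeasure,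
    Measure.map_sum (measurable_of_countable a).aemeasurable]
  congr 1 with h : 1
  rw [Measure.map_smul, Measure.map_dirac' (measurable_of_countable a)]

theorem pEPPF_of_proper_mSSP_general {Ω : Type*} [MeasurableSpace Ω] {𝕏 : Type*} [MeasurableSpace 𝕏]
    [StandardBorelSpace 𝕏] {J : ℕ}
    (Pr : Measure Ω) [IsProbabilityMeasure Pr]
    (P₀ : Measure 𝕏) [NullSingletonClass P₀]
    (P : Fin J → Ω → Measure 𝕏) (π : Fin J → ℕ → Ω → ℝ) (θ : ℕ → Ω → 𝕏)
    (hP : IsMSSPwith Pr P₀ P π θ)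
    (hproper : ∀ j, ∀ᵐ ω ∂Pr, ∑' h, π j h ω = 1)
    (I : Fin J → ℕ) (D : ℕ) (c : (Σ j, Fin (I j)) → Fin D) (hc : Function.Surjective c) :
    pEPPF Pr P c
      = ∫⁻ ω, ∑' f : {f : Fin D → ℕ // Function.Injective f},
          ∏ j, ∏ d, ENNReal.ofReal (π j (f.val d) ω)
            ^ (Finset.univ.filter fun i : Fin (I j) => c ⟨j, i⟩ = d).card ∂Pr := by
  refine lintegral_congr_ae ?_
  filter_upwards [hP.iidθ.ae_injective hP.measθ hP.lawθ, ae_all_iff.2 hP.repr,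
    ae_all_iff.2 hP.subprob, ae_all_iff.2 hproper] with ω hinj hrepr hsub hsum
  have : ∀ l : Σ j, Fin (I j), IsProbabilityMeasure (weightMeasure (π l.1 · ω)) := fun l =>
    isProbabilityMeasure_weightMeasure (fun h => ((hsub l.1).1 h).1) (hsum l.1)
  have hPω : (fun l : Σ j, Fin (I j) => P l.1 ω)
      = fun l => (weightMeasure (π l.1 · ω)).map (θ · ω) :=
    funext fun l => (hrepr l.1).trans (mixM_eq_map_weightMeasure P₀ (hsum l.1) _)
  rw [hPω, pi_map_sameBlocks _ hinj hc]
  refine tsum_congr fun f => ?_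
  simp only [weightMeasure_singleton]
  exact prod_sigma_eq_prod_pow_card c fun j d => ENNReal.ofReal (π j (f.1 d) ω)

/-- For a proper multivariate species sampling process with weight array `π`,
the pEPPF is `E[Σ_{h₁ ≠ ⋯ ≠ h_D} ∏_j ∏_d π_{j,h_d}^{n_{j,d}}]`, the sum running over all tuples
of pairwise distinct indices; here `n_{j,d}` is the number of labels of group `j` assigned to
block `d` by `c`. -/
theorem pEPPF_of_proper_mSSP {Ω : Type*} [MeasurableSpace Ω] {𝕏 : Type*} [MeasurableSpace 𝕏]
    [StandardBorelSpace 𝕏] {J : ℕ}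
    (Pr : Measure Ω) [IsProbabilityMeasure Pr]
    (P₀ : Measure 𝕏) [IsProbabilityMeasure P₀] [NullSingletonClass P₀]
    (P : Fin J → Ω → Measure 𝕏) (π : Fin J → ℕ → Ω → ℝ) (θ : ℕ → Ω → 𝕏)
    (hP : IsMSSPwith Pr P₀ P π θ)
    (hproper : ∀ j, ∀ᵐ ω ∂Pr, ∑' h, π j h ω = 1)
    (I : Fin J → ℕ) (D : ℕ) (c : (Σ j, Fin (I j)) → Fin D) (hc : Function.Surjective c) :
    pEPPF Pr P c
      = ∫⁻ ω, ∑' f : {f : Fin D → ℕ // Function.Injective f},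
          ∏ j, ∏ d, ENNReal.ofReal (π j (f.val d) ω)
            ^ (Finset.univ.filter fun i : Fin (I j) => c ⟨j, i⟩ = d).card ∂Pr :=
  pEPPF_of_proper_mSSP_general Pr P₀ P π θ hP hproper I D c hc

end MSSP
end
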